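/- arXiv:1308.3651 — 6 statements merged into one kernel-verified Lean document; each statement's English description precedes it below -/
import Mathlib

section
/- Let I be a prime ideal of the Gaussian integers ℤ[i] such that the quotient ring ℤ[i]/I has characteristic different from 2. Then the kernel Γ₀(I) of the group homomorphism PSL₂(ℤ[i]) → PSL₂(ℤ[i]/I) induced by the quotient ring homomorphism ℤ[i] → ℤ[i]/I is a torsion-free group. -/
open Matrix MatrixGroups

/-- The homomorphism `PSL₂(R) → PSL₂(S)` induced entrywise by a ring homomorphism
`f : R →+* S`: the entrywise map `SL₂(R) → SL₂(S)` sends the center into the center,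
hence descends to the quotients. -/
def pslMap {R S : Type*} [CommRing R] [CommRing S] (f : R →+* S) :
    Matrix.ProjectiveSpecialLinearGroup (Fin 2) R →*
      Matrix.ProjectiveSpecialLinearGroup (Fin 2) S :=
  QuotientGroup.map _ _ (Matrix.SpecialLinearGroup.map f) (by
    intro A hA
    rw [Subgroup.mem_comap]
    obtain ⟨r, hr, hrA⟩ := Matrix.SpecialLinearGroup.mem_center_iff.mp hA
    refine Matrix.SpecialLinearGroup.mem_center_iff.mpr ⟨f r, ?_, ?_⟩
    · rw [← map_pow f, hr, f.map_one]
    · have : ((Matrix.SpecialLinearGroup.map f) A : Matrix (Fin 2) (Fin 2) S)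
        = (A : Matrix (Fin 2) (Fin 2) R).map f := rfl
      rw [this, ← hrA]
      ext i j
      by_cases h : i = j <;>
        simp [Matrix.scalar, Matrix.map_apply, Matrix.one_apply, h])

/-- `Monoid.IsTorsionFree G` (removed from Mathlib): no nontrivial element has finite order. -/
def Monoid.IsTorsionFree (G : Type*) [Monoid G] : Prop :=
  ∀ g : G, g ≠ 1 → ¬IsOfFinOrder g

/-!
Lift a torsion element of `Γ₀(I)` to `B ∈ SL₂(ℤ[i])` with `B ≡ 1 mod I`. The centre of `SL₂` over
a domain is `{±1}`, so `B` itself has finite order, and it suffices to show that `B ^ q = 1` with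
`q` prime forces `B = 1`. Write `I = (π)` and `B = 1 + M`. If `π ^ k` divides `M`, `k ≥ 1`, the
binomial expansion `q M = -∑_{m ≥ 2} (q choose m) M ^ m` shows that `π ^ (k + 1)` divides `M` as
well: when `π ∤ q` at once, and when `π ∣ q` because then `q ≠ 2` (as `2 ∉ I`), `π` divides the
middle binomial coefficients, and `π ^ 2 ∤ q` since odd rational primes are unramified in `ℤ[i]`.
Hence `M = 0`.
-/

theorem nsmul_eq_neg_sum_of_one_add_pow_eq_one {A : Type*} [Ring A] {x : A} {q : ℕ}
    (h : (1 + x) ^ q = 1) :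
    q • x = -∑ m ∈ Finset.Ico 2 (q + 1), q.choose m • x ^ m := by
  rcases Nat.eq_zero_or_pos q with rfl | hq
  · simp
  have hsum := (Commute.one_right x).add_pow q
  rw [add_comm, h, Finset.range_eq_Ico, Finset.sum_eq_sum_Ico_succ_bot (by omega),
    Finset.sum_eq_sum_Ico_succ_bot (by omega)] at hsum
  simp only [one_pow, mul_one, ← nsmul_eq_mul', pow_zero, zero_add, pow_one,
    Nat.choose_zero_right, Nat.choose_one_right, one_smul, left_eq_add] at hsum
  rw [eq_neg_iff_add_eq_zero, hsum]

theorem Monoid.isTorsionFree_of_forall_pow_prime_eq_one {G : Type*} [Group G]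
    (h : ∀ g : G, ∀ p : ℕ, p.Prime → g ^ p = 1 → g = 1) : Monoid.IsTorsionFree G := by
  intro g hg hfin
  obtain ⟨p, hp, hpg⟩ := Nat.exists_prime_and_dvd (orderOf_eq_one_iff.not.mpr hg)
  have hord := orderOf_pow_orderOf_div hfin.orderOf_pos.ne' hpg
  have h1 : g ^ (orderOf g / p) = 1 :=
    h _ p hp (by simpa only [hord] using pow_orderOf_eq_one (g ^ (orderOf g / p)))
  rw [h1, orderOf_one] at hord
  exact hp.one_lt.ne hord

theorem Ideal.two_notMem_of_ringChar_quotient_ne_two {R : Type*} [CommRing R] {I : Ideal R}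
    (hI : I ≠ ⊤) (h : ringChar (R ⧸ I) ≠ 2) : (2 : R) ∉ I := by
  intro h2
  have : Nontrivial (R ⧸ I) := Ideal.Quotient.nontrivial_iff.mpr hI
  have hdvd : ringChar (R ⧸ I) ∣ 2 :=
    ringChar.dvd (by exact_mod_cast Ideal.Quotient.eq_zero_iff_mem.mpr h2)
  exact h ((Nat.prime_two.eq_one_or_self_of_dvd _ hdvd).resolve_left CharP.ringChar_ne_one)

namespace Matrix

variable {n R : Type*} [Fintype n] [DecidableEq n]

theorem pow_dvd_pow_apply [CommSemiring R] {M : Matrix n n R} {a : R}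
    (h : ∀ i j, a ∣ M i j) (m : ℕ) (i j : n) : a ^ m ∣ (M ^ m) i j := by
  induction m generalizing i j with
  | zero => simp
  | succ m ih =>
    rw [pow_succ, pow_succ, mul_apply]
    exact Finset.dvd_sum fun k _ => mul_dvd_mul (ih i k) (h k j)

variable [CommRing R] [IsDomain R] {π : R} {q : ℕ} {M : Matrix n n R}

theorem pow_succ_dvd_apply_of_one_add_pow_eq_one (hπ : Prime π) (hπ2 : ¬π ∣ 2) (hq : q.Prime)
    (hπq : ¬π ^ 2 ∣ (q : R)) (hMq : (1 + M) ^ q = 1) {k : ℕ} (hk : 1 ≤ k)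
    (hM : ∀ i j, π ^ k ∣ M i j) (i j : n) : π ^ (k + 1) ∣ M i j := by
  have hpow (m : ℕ) : π ^ (k * m) ∣ (M ^ m) i j := pow_mul π k m ▸ pow_dvd_pow_apply hM m i j
  have hsum : (q : R) * M i j = -∑ m ∈ Finset.Ico 2 (q + 1), (q.choose m : R) * (M ^ m) i j := by
    have h := congrArg (· i j) (nsmul_eq_neg_sum_of_one_add_pow_eq_one hMq)
    simp only [neg_apply, sum_apply, smul_apply] at h
    simpa only [nsmul_eq_mul] using h
  by_cases hπq' : π ∣ (q : R)
  · obtain ⟨u, hu⟩ := hπq'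
    have hu' : ¬π ∣ u := fun h => hπq (by rw [hu, sq]; exact mul_dvd_mul_left π h)
    have hq3 : 3 ≤ q := by
      have : q ≠ 2 := by rintro rfl; exact hπ2 ⟨u, by exact_mod_cast hu⟩
      have := hq.two_le
      omega
    have hdvd : π ^ (k + 2) ∣ (q : R) * M i j := by
      rw [hsum, dvd_neg]
      refine Finset.dvd_sum fun m hm => ?_
      obtain ⟨hm2, hmq⟩ := Finset.mem_Ico.mp hm
      rcases (Nat.lt_succ_iff.mp hmq).lt_or_eq with hmq | rfl
      · have hπc : π ∣ (q.choose m : R) :=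
          (dvd_mul_right π u).trans (hu ▸ Nat.cast_dvd_cast (hq.dvd_choose_self (by omega) hmq))
        rw [pow_succ']
        exact mul_dvd_mul hπc ((pow_dvd_pow π (by nlinarith)).trans (hpow m))
      · exact ((pow_dvd_pow π (by nlinarith)).trans (hpow m)).mul_left _
    rw [hu, mul_assoc, pow_succ', mul_dvd_mul_iff_left hπ.ne_zero] at hdvd
    exact hπ.pow_dvd_of_dvd_mul_left _ hu' hdvd
  · refine hπ.pow_dvd_of_dvd_mul_left _ hπq' ?_
    rw [hsum, dvd_neg]
    exact Finset.dvd_sum fun m hm =>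
      ((pow_dvd_pow π (by nlinarith [(Finset.mem_Ico.mp hm).1])).trans (hpow m)).mul_left _

theorem eq_one_of_pow_eq_one_of_dvd_sub_one [WfDvdMonoid R] (hπ : Prime π) (hπ2 : ¬π ∣ 2)
    (hq : q.Prime) (hπq : ¬π ^ 2 ∣ (q : R)) {B : Matrix n n R} (hB : ∀ i j, π ∣ (B - 1) i j)
    (hBq : B ^ q = 1) : B = 1 := by
  have hMq : (1 + (B - 1)) ^ q = 1 := by rwa [add_sub_cancel]
  have hdvd : ∀ k, 1 ≤ k → ∀ i j, π ^ k ∣ (B - 1) i j :=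
    Nat.le_induction (by simpa using hB) fun k hk ih =>
      pow_succ_dvd_apply_of_one_add_pow_eq_one hπ hπ2 hq hπq hMq hk ih
  rw [← sub_eq_zero]
  ext i j
  by_contra hne
  exact FiniteMultiplicity.not_iff_forall.mpr
    (fun k => (pow_dvd_pow π k.le_succ).trans (hdvd (k + 1) k.succ_pos i j))
    (FiniteMultiplicity.of_prime_left hπ hne)

end Matrix

namespace Matrix.SpecialLinearGroup

variable {R : Type*} [CommRing R]

theorem mem_ker_map_quotient_mk_iff {n : Type*} [Fintype n] [DecidableEq n] {I : Ideal R}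
    {B : SpecialLinearGroup n R} :
    B ∈ (map (Ideal.Quotient.mk I)).ker ↔ ∀ i j, (B - 1 : Matrix n n R) i j ∈ I := by
  simp only [MonoidHom.mem_ker, SpecialLinearGroup.ext_iff, map_apply_coe, RingHom.mapMatrix_apply,
    map_apply, coe_one, sub_apply]
  refine forall₂_congr fun i j => ?_
  rw [← Ideal.Quotient.eq_zero_iff_mem, map_sub, sub_eq_zero]
  by_cases h : i = j <;> simp [one_apply, h]

theorem eq_one_or_eq_neg_one_of_mem_center [IsDomain R] {A : SL(2, R)}
    (hA : A ∈ Subgroup.center SL(2, R)) : A = 1 ∨ A = -1 := by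
  obtain ⟨r, hr, hrA⟩ := mem_center_iff.mp hA
  rw [Fintype.card_fin, sq_eq_one_iff] at hr
  rcases hr with rfl | rfl
  · left; ext : 1; simp [← hrA]
  · right; ext : 1; simp [← hrA, map_neg]

theorem isOfFinOrder_of_isOfFinOrder_mk [IsDomain R] {B : SL(2, R)}
    (h : IsOfFinOrder (B : ProjectiveSpecialLinearGroup (Fin 2) R)) : IsOfFinOrder B := by
  obtain ⟨m, hm, hBm⟩ := isOfFinOrder_iff_pow_eq_one.mp h
  rw [← QuotientGroup.mk_pow, QuotientGroup.eq_one_iff] at hBm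
  refine isOfFinOrder_iff_pow_eq_one.mpr ⟨m * 2, by omega, ?_⟩
  rcases eq_one_or_eq_neg_one_of_mem_center hBm with h1 | h1 <;> simp [pow_mul, h1]

end Matrix.SpecialLinearGroup

theorem pslMap_exists_lift_mem_ker {R S : Type*} [CommRing R] [CommRing S] [IsDomain S]
    {f : R →+* S} {g : ProjectiveSpecialLinearGroup (Fin 2) R} (hg : g ∈ (pslMap f).ker) :
    ∃ B : SL(2, R), B ∈ (SpecialLinearGroup.map f).ker ∧
      (B : ProjectiveSpecialLinearGroup (Fin 2) R) = g := by
  obtain ⟨A, rfl⟩ := QuotientGroup.mk_surjective g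
  rw [MonoidHom.mem_ker, pslMap, QuotientGroup.map_mk, QuotientGroup.eq_one_iff] at hg
  rcases SpecialLinearGroup.eq_one_or_eq_neg_one_of_mem_center hg with h | h
  · exact ⟨A, h, rfl⟩
  · refine ⟨-A, ?_, ?_⟩
    · rw [MonoidHom.mem_ker]
      ext i j
      simpa using congrArg (fun B : SL(2, S) => -(B : Matrix (Fin 2) (Fin 2) S) i j) h
    · rw [← neg_one_mul A, QuotientGroup.mk_mul, (QuotientGroup.eq_one_iff _).mpr
        (Subgroup.mem_center_iff.mpr fun B => by simp), one_mul]

theorem GaussianInt.not_sq_dvd_natCast {π : GaussianInt} (hπ : Prime π) (hπ2 : ¬π ∣ 2) {q : ℕ}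
    (hq : q.Prime) : ¬π ^ 2 ∣ (q : GaussianInt) := by
  -- `π ^ 2 ∣ q = π * star π` gives `π ∣ star π`, so `π` divides `2 * re π` and `2 * im π`,
  -- whence `q ∣ π`
  intro hsq
  have hnorm : π.norm = q := by
    have h : (π ^ 2).norm ∣ (q : GaussianInt).norm := map_dvd Zsqrtd.normMonoidHom hsq
    rw [sq, Zsqrtd.norm_mul, Zsqrtd.norm_natCast, ← sq, ← sq, Int.pow_dvd_pow_iff two_ne_zero,
      ← GaussianInt.abs_natCast_norm] at h
    rw [← GaussianInt.abs_natCast_norm, Nat.cast_inj]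
    exact (hq.eq_one_or_self_of_dvd _ (Int.natCast_dvd_natCast.mp h)).resolve_left
      fun h1 => hπ.not_isUnit (Zsqrtd.norm_eq_one_iff.mp h1)
  have hconj : π ∣ star π := by
    have : (q : GaussianInt) = π * star π := by rw [← Zsqrtd.norm_eq_mul_conj, hnorm]; rfl
    rwa [this, sq, mul_dvd_mul_iff_left hπ.ne_zero] at hsq
  have hq_dvd (a : ℤ) (ha : π ∣ (a : GaussianInt)) : (q : ℤ) ∣ a := by
    have h : π.norm ∣ (a : GaussianInt).norm := map_dvd Zsqrtd.normMonoidHom ha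
    rw [Zsqrtd.norm_intCast, hnorm] at h
    exact (Int.Prime.dvd_mul' hq h).elim id id
  have hre : π ∣ (π.re : GaussianInt) := by
    have : π + star π = 2 * (π.re : GaussianInt) := by ext <;> simp [two_mul]
    exact (hπ.dvd_or_dvd (this ▸ dvd_add dvd_rfl hconj)).resolve_left hπ2
  have him : π ∣ (π.im : GaussianInt) := by
    have : (star π - π) * ⟨0, 1⟩ = 2 * (π.im : GaussianInt) := by ext <;> simp; ring
    exact (hπ.dvd_or_dvd (this ▸ (dvd_sub hconj dvd_rfl).mul_right _)).resolve_left hπ2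
  have hqπ : (q : GaussianInt) ∣ π := by
    exact_mod_cast (Zsqrtd.intCast_dvd (q : ℤ) π).mpr ⟨hq_dvd _ hre, hq_dvd _ him⟩
  have hππ : π * π ∣ π * 1 := by simpa [sq] using hsq.trans hqπ
  exact hπ.not_isUnit (isUnit_of_dvd_one ((mul_dvd_mul_iff_left hπ.ne_zero).mp hππ))

theorem GaussianInt.isTorsionFree_ker_map_quotient_mk {I : Ideal GaussianInt} [I.IsPrime]
    (h2 : (2 : GaussianInt) ∉ I) :
    Monoid.IsTorsionFree (SpecialLinearGroup.map (n := Fin 2) (Ideal.Quotient.mk I)).ker := by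
  refine Monoid.isTorsionFree_of_forall_pow_prime_eq_one fun ⟨B, hB⟩ p hp hBp => ?_
  have hBI := SpecialLinearGroup.mem_ker_map_quotient_mk_iff.mp hB
  have hBp' : (B : Matrix (Fin 2) (Fin 2) GaussianInt) ^ p = 1 := by
    simpa using congrArg (fun C : (SpecialLinearGroup.map _).ker => ((C : SL(2, GaussianInt)) :
      Matrix (Fin 2) (Fin 2) GaussianInt)) hBp
  suffices (B : Matrix (Fin 2) (Fin 2) GaussianInt) = 1 from Subtype.ext (Subtype.ext this)
  rcases eq_or_ne I ⊥ with rfl | hI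
  · simpa [sub_eq_zero, ← Matrix.ext_iff] using hBI
  · set π := Submodule.IsPrincipal.generator I
    have hπ : Prime π := Submodule.IsPrincipal.prime_generator_of_isPrime I hI
    have hπ2 : ¬π ∣ 2 := by rwa [← Submodule.IsPrincipal.mem_iff_generator_dvd]
    exact Matrix.eq_one_of_pow_eq_one_of_dvd_sub_one hπ hπ2 hp
      (GaussianInt.not_sq_dvd_natCast hπ hπ2 hp)
      (fun i j => (Submodule.IsPrincipal.mem_iff_generator_dvd I).mp (hBI i j)) hBp'

/-- If `I` is a prime ideal of the Gaussian integers `ℤ[i]` such that the quotient ring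
`ℤ[i]/I` has characteristic different from `2`, then the kernel `Γ₀(I)` of the induced
homomorphism `PSL₂(ℤ[i]) → PSL₂(ℤ[i]/I)` is a torsion-free group. -/
theorem gamma0_isTorsionFree (I : Ideal GaussianInt) (hI : I.IsPrime)
    (hchar : ringChar (GaussianInt ⧸ I) ≠ 2) :
    Monoid.IsTorsionFree (pslMap (Ideal.Quotient.mk I)).ker := by
  intro g hg hfin
  obtain ⟨B, hB, hBg⟩ := pslMap_exists_lift_mem_ker g.2
  have hBfin : IsOfFinOrder B := SpecialLinearGroup.isOfFinOrder_of_isOfFinOrder_mk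
    (hBg ▸ Submonoid.isOfFinOrder_coe.mpr hfin)
  have hB1 : B = 1 := by
    by_contra hne
    exact GaussianInt.isTorsionFree_ker_map_quotient_mk
      (Ideal.two_notMem_of_ringChar_quotient_ne_two hI.ne_top hchar) ⟨B, hB⟩
      (fun h => hne (congrArg Subtype.val h)) (Submonoid.isOfFinOrder_coe.mp hBfin)
  apply hg
  ext1
  rw [← hBg, hB1]
  rfl
end

section
/- Let A ∈ SL₂(ℤ[i]) and suppose there exists an integer n ≥ 1 such that Aⁿ = 1 or Aⁿ = −1 (where 1 denotes the identity matrix). Then trace(A) is one of the elements −2, −1, 0, 1, 2 of ℤ[i]. -/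
/-!
Since `A ^ n = ±1`, `A` has finite order, hence so has its image in `SL(2, ℂ)`. An eigenvalue `μ`
of that image is then a root of unity, so `‖μ‖ = 1`, and by Cayley–Hamilton
`μ ^ 2 - (trace A) μ + 1 = 0`, i.e. `trace A = μ + μ⁻¹ = μ + conj μ = 2 Re μ ∈ [-2, 2]`.
A Gaussian integer that is a real number in `[-2, 2]` is one of `-2, -1, 0, 1, 2`.
-/

open Matrix MatrixGroups

instance : Fact (Even (Fintype.card (Fin 2))) := ⟨by simp⟩

theorem isOfFinOrder_of_pow_eq_one_or_neg_one {M : Type*} [Monoid M] [HasDistribNeg M] {x : M}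
    {n : ℕ} (hn : n ≠ 0) (h : x ^ n = 1 ∨ x ^ n = -1) : IsOfFinOrder x :=
  IsOfFinOrder.of_pow
    (isOfFinOrder_iff_pow_eq_one.2 ⟨2, two_pos, by rcases h with h | h <;> simp [h]⟩) hn

theorem spectrum.pow_eq_one_of_pow_eq_one {𝕜 A : Type*} [Field 𝕜] [Ring A] [Nontrivial A]
    [Algebra 𝕜 A] {a : A} {n : ℕ} (ha : a ^ n = 1) {k : 𝕜} (hk : k ∈ spectrum 𝕜 a) :
    k ^ n = 1 := by
  simpa [ha, spectrum.one_eq] using spectrum.pow_mem_pow a n hk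

theorem Matrix.sq_sub_trace_mul_add_det_eq_zero_of_mem_spectrum {K : Type*} [Field K]
    {M : Matrix (Fin 2) (Fin 2) K} {μ : K} (hμ : μ ∈ spectrum K M) :
    μ ^ 2 - M.trace * μ + M.det = 0 := by
  simpa [charpoly_fin_two] using (mem_spectrum_iff_isRoot_charpoly.1 hμ).eq_zero

theorem Complex.eq_two_mul_re_of_sq_sub_mul_add_one_eq_zero {μ t : ℂ} (hμ : ‖μ‖ = 1)
    (h : μ ^ 2 - t * μ + 1 = 0) : t = 2 * μ.re := by
  have hμ₀ : μ ≠ 0 := norm_ne_zero_iff.1 (by rw [hμ]; exact one_ne_zero)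
  calc t = μ + μ⁻¹ := by field_simp; linear_combination -h
    _ = 2 * μ.re := by rw [inv_eq_conj hμ, add_conj]; push_cast; ring

theorem Matrix.SpecialLinearGroup.trace_mem_image_ofReal_Icc_of_isOfFinOrder {M : SL(2, ℂ)}
    (hM : IsOfFinOrder M) :
    trace (M : Matrix (Fin 2) (Fin 2) ℂ) ∈ ((↑) : ℝ → ℂ) '' Set.Icc (-2) 2 := by
  obtain ⟨m, hm, hMm⟩ := hM.exists_pow_eq_one
  obtain ⟨μ, hμ⟩ :=
    spectrum.nonempty_of_isAlgClosed_of_finiteDimensional ℂ (M : Matrix (Fin 2) (Fin 2) ℂ)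
  have hμ_norm : ‖μ‖ = 1 := Complex.norm_eq_one_of_pow_eq_one
    (spectrum.pow_eq_one_of_pow_eq_one (by rw [← coe_pow, hMm, coe_one]) hμ) hm.ne'
  have hquad := sq_sub_trace_mul_add_det_eq_zero_of_mem_spectrum hμ
  rw [M.det_coe] at hquad
  have hre := abs_le.1 (μ.abs_re_le_norm.trans hμ_norm.le)
  refine ⟨2 * μ.re, ⟨by linarith [hre.1], by linarith [hre.2]⟩, ?_⟩
  rw [Complex.eq_two_mul_re_of_sq_sub_mul_add_one_eq_zero hμ_norm hquad]
  push_cast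
  rfl

theorem GaussianInt.mem_of_toComplex_mem_image_ofReal_Icc {z : GaussianInt}
    (hz : GaussianInt.toComplex z ∈ ((↑) : ℝ → ℂ) '' Set.Icc (-2) 2) :
    z ∈ ({-2, -1, 0, 1, 2} : Set GaussianInt) := by
  obtain ⟨r, ⟨hr₁, hr₂⟩, hr⟩ := hz
  obtain ⟨a, b⟩ := z
  have ha : (a : ℝ) = r := by rw [← re_toComplex a b, ← hr, Complex.ofReal_re]
  have hb : (b : ℝ) = 0 := by rw [← im_toComplex a b, ← hr, Complex.ofReal_im]
  have ha₁ : -2 ≤ a := by exact_mod_cast ha ▸ hr₁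
  have ha₂ : a ≤ 2 := by exact_mod_cast ha ▸ hr₂
  obtain rfl : b = 0 := Int.cast_eq_zero.1 hb
  interval_cases a <;> simp [Zsqrtd.ext_iff]

/-- If `A ∈ SL₂(ℤ[i])` satisfies `Aⁿ = 1` or `Aⁿ = -1` for some `n ≥ 1`, then
`trace A ∈ {-2, -1, 0, 1, 2}`. -/
theorem trace_mem_of_pow_eq_one_or_neg_one
    (A : Matrix.SpecialLinearGroup (Fin 2) GaussianInt)
    (h : ∃ n : ℕ, 1 ≤ n ∧ (A ^ n = 1 ∨ A ^ n = -1)) :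
    Matrix.trace (A : Matrix (Fin 2) (Fin 2) GaussianInt) ∈
      ({-2, -1, 0, 1, 2} : Set GaussianInt) := by
  obtain ⟨n, hn, hA⟩ := h
  have hfin := (SpecialLinearGroup.map GaussianInt.toComplex).isOfFinOrder
    (isOfFinOrder_of_pow_eq_one_or_neg_one (by omega) hA)
  apply GaussianInt.mem_of_toComplex_mem_image_ofReal_Icc
  simpa [AddMonoidHom.map_trace] using
    SpecialLinearGroup.trace_mem_image_ofReal_Icc_of_isOfFinOrder hfin
end

section
/- For every maximal ideal I of the Gaussian integers ℤ[i], the reduction homomorphism SL₂(ℤ[i]) → SL₂(ℤ[i]/I), induced entrywise by the quotient ring homomorphism ℤ[i] → ℤ[i]/I, is surjective. -/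
open Matrix MatrixGroups

namespace Matrix.SpecialLinearGroup

variable {ι R S : Type*} [Fintype ι] [DecidableEq ι] [CommRing R] [CommRing S]

theorem map_transvection (f : R →+* S) {i j : ι} (hij : i ≠ j) (b : R) :
    map f (transvection hij b) = transvection hij (f b) := by
  ext k l
  simp [transvection_coe, Matrix.one_apply, Matrix.single_apply, apply_ite f]

theorem transvection_mem_range_map {f : R →+* S} (hf : Function.Surjective f) {i j : ι}
    (hij : i ≠ j) (c : S) : transvection hij c ∈ (map f).range := by
  obtain ⟨b, rfl⟩ := hf c
  exact ⟨transvection hij b, map_transvection f hij b⟩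

/-- `SL₂` of a field is generated by transvections, and transvections lift along `f`. -/
theorem map_surjective_of_surjective_field {F : Type*} [Field F] {f : R →+* F}
    (hf : Function.Surjective f) : Function.Surjective (map f : SL(2, R) →* SL(2, F)) :=
  fun A ↦ SL2.transvection_induction (· ∈ (map f).range)
    (fun _ _ hij c ↦ transvection_mem_range_map hf hij c) (fun _ _ ↦ mul_mem) A

end Matrix.SpecialLinearGroup

/-- For every maximal ideal `I` of the Gaussian integers `ℤ[i]`, the entrywise reduction
homomorphism `SL₂(ℤ[i]) → SL₂(ℤ[i]/I)` is surjective. -/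
theorem sl2_map_quotient_surjective (I : Ideal GaussianInt) (hI : I.IsMaximal) :
    Function.Surjective
      (Matrix.SpecialLinearGroup.map (Ideal.Quotient.mk I) :
        Matrix.SpecialLinearGroup (Fin 2) GaussianInt →*
          Matrix.SpecialLinearGroup (Fin 2) (GaussianInt ⧸ I)) :=
  letI := Ideal.Quotient.field I
  Matrix.SpecialLinearGroup.map_surjective_of_surjective_field Ideal.Quotient.mk_surjective
end

section
/- Let F be a finite field of odd cardinality q. Then the group PSL₂(F) has cardinality q(q² − 1)/2. -/
/-!
The determinant maps `GL₂(F)` onto `Fˣ` with kernel `SL₂(F)`, so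
`|SL₂(F)| = |GL₂(F)| / (q - 1) = (q² - 1)(q² - q) / (q - 1) = q(q² - 1)`.
The center of `SL₂(F)` consists of the scalars `λ` with `λ² = 1`, i.e. `±1`, and these are
distinct because `q` is odd; `PSL₂(F)` is the quotient by this center of order `2`.
-/

open Matrix MatrixGroups

namespace Matrix.SpecialLinearGroup

variable {n R : Type*} [Fintype n] [DecidableEq n] [CommRing R]

lemma toGL_range_eq_ker_det :
    (toGL : SpecialLinearGroup n R →* GL n R).range = GeneralLinearGroup.det.ker :=
  SetLike.coe_injective range_toGL

lemma card_GL_eq_card_units_mul_card_SL [Nonempty n] :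
    Nat.card (GL n R) = Nat.card Rˣ * Nat.card (SpecialLinearGroup n R) := by
  rw [GeneralLinearGroup.det.ker.card_eq_card_quotient_mul_card_subgroup,
    Nat.card_congr (QuotientGroup.quotientKerEquivOfSurjective _
      GeneralLinearGroup.det_surjective).toEquiv,
    ← toGL_range_eq_ker_det,
    ← Nat.card_congr (MonoidHom.ofInjective toGL_injective).toEquiv]

lemma card_center_eq_card_rootsOfUnity [Nonempty n] :
    Nat.card (Subgroup.center (SpecialLinearGroup n R)) =
      Nat.card (rootsOfUnity (Fintype.card n) R) :=
  Nat.card_congr (center_equiv_rootsOfUnity' (Classical.arbitrary n)).toEquiv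

end Matrix.SpecialLinearGroup

open Matrix.SpecialLinearGroup

lemma Matrix.card_SL_two_field (F : Type*) [Field F] [Fintype F] :
    Nat.card SL(2, F) = Fintype.card F * (Fintype.card F ^ 2 - 1) := by
  set q := Fintype.card F
  have hq : 1 < q := Fintype.one_lt_card
  have hGL := card_GL_eq_card_units_mul_card_SL (n := Fin 2) (R := F)
  rw [card_GL_field, Fin.prod_univ_two, Nat.card_units, Nat.card_eq_fintype_card] at hGL
  refine Nat.eq_of_mul_eq_mul_left (Nat.sub_pos_of_lt hq) (hGL.symm.trans ?_)
  simp only [Fin.val_zero, Fin.val_one, pow_zero, pow_one]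
  rw [show q ^ 2 - q = q * (q - 1) by rw [sq, Nat.mul_sub_one]]
  ring

lemma FiniteField.card_rootsOfUnity_two_of_odd (F : Type*) [Field F] [Fintype F]
    (hodd : Odd (Fintype.card F)) : Nat.card (rootsOfUnity 2 F) = 2 := by
  have hchar : ringChar F ≠ 2 := fun h ↦ by
    simpa [Nat.odd_iff.mp hodd] using FiniteField.even_card_of_char_two h
  exact (IsPrimitiveRoot.neg_one _ hchar).card_rootsOfUnity

/-- If `F` is a finite field of odd cardinality `q`, then `|PSL₂(F)| = q(q² - 1)/2`. -/
theorem card_psl2 (F : Type*) [Field F] [Fintype F]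
    (q : ℕ) (hq : Fintype.card F = q) (hodd : Odd q) :
    Nat.card (Matrix.ProjectiveSpecialLinearGroup (Fin 2) F) = q * (q ^ 2 - 1) / 2 := by
  have hcenter : Nat.card (Subgroup.center (SL(2, F))) = 2 := by
    rw [card_center_eq_card_rootsOfUnity (n := Fin 2), Fintype.card_fin]
    exact FiniteField.card_rootsOfUnity_two_of_odd F (hq ▸ hodd)
  have hlagrange := (Subgroup.center (SL(2, F))).card_eq_card_quotient_mul_card_subgroup
  rw [card_SL_two_field, hq, hcenter] at hlagrange
  rw [hlagrange]
  exact (Nat.mul_div_cancel _ two_pos).symm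
end

section
/- Let p be a prime element of the Gaussian integers ℤ[i] whose norm is greater than 5. Then there do not exist a, b, c, d, z ∈ ℤ[i] such that (ap + 1)(dp + 1) − bcp² = 1 and 2bp = (dp + 1)(1 + i + 2z). -/
open Matrix

/-!
Put `u = dp + 1` and `π = 1 + i`. The two equations give `u ∣ 2`, so `u` is a unit, has norm `2`,
or is associated to `2`. A unit is impossible because `2 ∤ 1 + i + 2z`. Norm `2` is impossible
because then `dp = u - 1` has norm at most `5 < N(p)` and is nonzero. If `2 ∣ u`, the second
equation gives `π ∣ bp`, and the first then gives `π ∣ 1`.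
-/

namespace GaussianInt

open Zsqrtd (sqrtd)

lemma one_add_sqrtd_dvd_two : (1 + sqrtd : GaussianInt) ∣ 2 :=
  ⟨1 - sqrtd, by ext <;> simp [Zsqrtd.re_mul, Zsqrtd.im_mul]⟩

lemma one_add_sqrtd_dvd_one_add_sqrtd_add_two_mul (z : GaussianInt) :
    (1 + sqrtd : GaussianInt) ∣ 1 + sqrtd + 2 * z :=
  dvd_add dvd_rfl (one_add_sqrtd_dvd_two.mul_right z)

lemma not_one_add_sqrtd_dvd_one : ¬ (1 + sqrtd : GaussianInt) ∣ 1 := fun h ↦ by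
  have := (Zsqrtd.norm_eq_one_iff' (by norm_num) _).2 (isUnit_of_dvd_one h)
  simp [Zsqrtd.norm] at this

lemma not_two_dvd_one_add_sqrtd_add_two_mul (z : GaussianInt) :
    ¬ (2 : GaussianInt) ∣ 1 + sqrtd + 2 * z := by
  rw [← Int.cast_two, Zsqrtd.intCast_dvd]
  simp

lemma isUnit_or_norm_eq_two_or_associated_two_of_dvd_two {u : GaussianInt} (hu : u ∣ 2) :
    IsUnit u ∨ u.norm = 2 ∨ Associated u 2 := by
  obtain ⟨w, hw⟩ := hu
  have hnorm : u.norm * w.norm = 4 := by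
    rw [← Zsqrtd.norm_mul, ← hw]; rfl
  have hu0 := GaussianInt.norm_nonneg u
  have hw0 := GaussianInt.norm_nonneg w
  have hle : u.norm ≤ 4 := Int.le_of_dvd four_pos ⟨w.norm, hnorm.symm⟩
  interval_cases h : u.norm
  · omega
  · exact .inl ((Zsqrtd.norm_eq_one_iff' (by norm_num) u).1 h)
  · exact .inr (.inl rfl)
  · omega
  · have hw1 : IsUnit w := (Zsqrtd.norm_eq_one_iff' (by norm_num) w).1 (by omega)
    exact .inr (.inr ⟨hw1.unit, hw.symm⟩)

lemma norm_le_five_of_norm_add_one_eq_two {x : GaussianInt} (h : (x + 1).norm = 2) :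
    x.norm ≤ 5 := by
  simp only [Zsqrtd.norm, Zsqrtd.re_add, Zsqrtd.re_one, Zsqrtd.im_add, Zsqrtd.im_one] at h ⊢
  nlinarith [sq_nonneg (x.re + 2), sq_nonneg x.im]

lemma norm_mul_add_one_ne_two {d p : GaussianInt} (hp : 5 < p.norm) :
    (d * p + 1).norm ≠ 2 := by
  intro h
  rcases eq_or_ne d 0 with rfl | hd
  · simp [Zsqrtd.norm] at h
  · have hle := norm_le_five_of_norm_add_one_eq_two h
    have hd1 : 1 ≤ d.norm := GaussianInt.norm_pos.2 hd
    rw [Zsqrtd.norm_mul] at hle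
    nlinarith

lemma not_isUnit_of_two_mul_eq {u y z : GaussianInt} (h : 2 * y = u * (1 + sqrtd + 2 * z)) :
    ¬ IsUnit u := fun hu ↦
  not_two_dvd_one_add_sqrtd_add_two_mul z (hu.dvd_mul_left.mp ⟨y, h.symm⟩)

lemma not_two_dvd_of_mul_sub_mul_eq_one {u x y w z : GaussianInt} (h1 : x * u - y * w = 1)
    (h2 : 2 * y = u * (1 + sqrtd + 2 * z)) : ¬ 2 ∣ u := by
  rintro ⟨v, rfl⟩
  have hy : y = v * (1 + sqrtd + 2 * z) :=
    mul_left_cancel₀ two_ne_zero (by rw [h2]; ring)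
  have hπy : (1 + sqrtd : GaussianInt) ∣ y :=
    hy ▸ (one_add_sqrtd_dvd_one_add_sqrtd_add_two_mul z).mul_left v
  have hπ : (1 + sqrtd : GaussianInt) ∣ x * (2 * v) - y * w :=
    dvd_sub ((one_add_sqrtd_dvd_two.mul_right v).mul_left x) (hπy.mul_right w)
  exact not_one_add_sqrtd_dvd_one (h1 ▸ hπ)

end GaussianInt

theorem no_edge_between_opposite_cusps_general (p : GaussianInt)
    (hnorm : 5 < p.norm) :
    ¬ ∃ a b c d z : GaussianInt,
        (a * p + 1) * (d * p + 1) - b * c * p ^ 2 = 1 ∧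
        2 * b * p = (d * p + 1) * (1 + Zsqrtd.sqrtd + 2 * z) := by
  rintro ⟨a, b, c, d, z, h1, h2⟩
  have h1' : (a * p + 1) * (d * p + 1) - (b * p) * (c * p) = 1 := by linear_combination h1
  have h2' : 2 * (b * p) = (d * p + 1) * (1 + Zsqrtd.sqrtd + 2 * z) := by linear_combination h2
  have hu : d * p + 1 ∣ 2 :=
    ⟨2 * (a * p + 1) - (1 + Zsqrtd.sqrtd + 2 * z) * (c * p), by
      linear_combination -2 * h1 - c * p * h2⟩
  rcases GaussianInt.isUnit_or_norm_eq_two_or_associated_two_of_dvd_two hu with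
    hunit | hnorm2 | hassoc
  · exact GaussianInt.not_isUnit_of_two_mul_eq h2' hunit
  · exact GaussianInt.norm_mul_add_one_ne_two hnorm hnorm2
  · exact GaussianInt.not_two_dvd_of_mul_sub_mul_eq_one h1' h2' hassoc.symm.dvd

/-- Let `p` be a prime Gaussian integer of norm greater than `5`. Then there are no
Gaussian integers `a, b, c, d, z` with `(ap + 1)(dp + 1) - bcp² = 1` and
`2bp = (dp + 1)(1 + i + 2z)`. -/
theorem no_edge_between_opposite_cusps (p : GaussianInt) (hp : Prime p)
    (hnorm : 5 < p.norm) :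
    ¬ ∃ a b c d z : GaussianInt,
        (a * p + 1) * (d * p + 1) - b * c * p ^ 2 = 1 ∧
        2 * b * p = (d * p + 1) * (1 + Zsqrtd.sqrtd + 2 * z) :=
  no_edge_between_opposite_cusps_general p hnorm
end

section
/- Let I be a prime ideal of the Gaussian integers ℤ[i] whose quotient ring F = ℤ[i]/I is a finite field of odd cardinality, and let ī ∈ F denote the image of i ∈ ℤ[i]. Then the image, under the induced homomorphism PSL₂(ℤ[i]) → PSL₂(F), of the subgroup of PSL₂(ℤ[i]) consisting of the classes of all matrices [[u, x],[0, u⁻¹]] with x ∈ ℤ[i] and u ∈ {1, i}, equals the subgroup of PSL₂(F) consisting of the classes of all upper triangular matrices [[w, y],[0, w⁻¹]] with w, y ∈ F and w⁴ = 1. -/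
/-!
Reduction modulo `I` maps the classes of `[[w, y], [0, w⁻¹]]` with `w` in a set `U` of units onto
the classes with `w` in the image of `U`: the off-diagonal entry lifts along the surjection and the
lower-right entry is forced to be the inverse of `w`. In `PSL₂` a matrix and its negative have the
same class, so the diagonal set may be enlarged to `U ∪ -U`. Finally, in the domain `ℤ[i]/I` the
factorisation `w⁴ - 1 = (w - 1)(w + 1)(w - ī)(w + ī)` shows that the fourth roots of unity are
exactly `{1, ī} ∪ -{1, ī}`.
-/

open Matrix MatrixGroups

/-- The natural projection `SL₂(R) → PSL₂(R)`, sending a matrix to its class modulo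
the center. -/
def pslmk {R : Type*} [CommRing R] :
    Matrix.SpecialLinearGroup (Fin 2) R →* Matrix.ProjectiveSpecialLinearGroup (Fin 2) R :=
  QuotientGroup.mk' (Subgroup.center (Matrix.SpecialLinearGroup (Fin 2) R))

open scoped Pointwise

section

variable {R S : Type*} [CommRing R] [CommRing S]

def upperTriangularClasses (U : Set R) : Set (ProjectiveSpecialLinearGroup (Fin 2) R) :=
  {g | ∃ w y w' : R, w ∈ U ∧ ∃ h : det !![w, y; 0, w'] = 1, g = pslmk ⟨!![w, y; 0, w'], h⟩}

lemma pslmk_neg (A : SL(2, R)) : pslmk (-A) = pslmk A := by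
  rw [pslmk, QuotientGroup.mk'_eq_mk']
  refine ⟨-1, Matrix.SpecialLinearGroup.mem_center_iff.mpr ⟨-1, ?_, ?_⟩, by simp⟩
  · simp
  · ext i j
    fin_cases i <;> fin_cases j <;> simp

lemma Matrix.SpecialLinearGroup.coe_map_upperTriangular (f : R →+* S) (a b d : R)
    (h : det !![a, b; 0, d] = 1) :
    (SpecialLinearGroup.map f ⟨!![a, b; 0, d], h⟩ : Matrix (Fin 2) (Fin 2) S) =
      !![f a, f b; 0, f d] := by
  change !![a, b; 0, d].map f = _
  ext i j
  fin_cases i <;> fin_cases j <;> simp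

lemma image_pslMap_upperTriangularClasses {f : R →+* S} (hf : Function.Surjective f)
    {U : Set R} (hU : ∀ u ∈ U, IsUnit u) :
    pslMap f '' upperTriangularClasses U = upperTriangularClasses (f '' U) := by
  ext g
  constructor
  · rintro ⟨_, ⟨w, y, w', hw, h, rfl⟩, rfl⟩
    have h' : det !![f w, f y; 0, f w'] = 1 := by
      simpa [det_fin_two_of] using congrArg f h
    exact ⟨f w, f y, f w', Set.mem_image_of_mem f hw, h',
      congrArg pslmk (Subtype.ext (SpecialLinearGroup.coe_map_upperTriangular f _ _ _ h))⟩
  · rintro ⟨_, y, w', ⟨w, hw, rfl⟩, h, rfl⟩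
    obtain ⟨v, hv⟩ := (hU w hw).exists_right_inv
    obtain ⟨x, rfl⟩ := hf y
    have hdet : det !![w, x; 0, v] = 1 := by simpa [det_fin_two_of] using hv
    have hv' : f v = w' := ((hU w hw).map f).mul_left_cancel <| by
      rw [← map_mul, hv, map_one]
      simpa [det_fin_two_of] using h.symm
    subst hv'
    exact ⟨_, ⟨w, x, v, hw, hdet, rfl⟩,
      congrArg pslmk (Subtype.ext (SpecialLinearGroup.coe_map_upperTriangular f _ _ _ hdet))⟩

lemma upperTriangularClasses_union_neg (U : Set R) :
    upperTriangularClasses (U ∪ -U) = upperTriangularClasses U := by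
  refine subset_antisymm ?_ fun g ⟨w, y, w', hw, h, hg⟩ ↦ ⟨w, y, w', Or.inl hw, h, hg⟩
  rintro _ ⟨w, y, w', hw | hw, h, rfl⟩
  · exact ⟨w, y, w', hw, h, rfl⟩
  · have hdet : det !![-w, -y; 0, -w'] = 1 := by simpa [det_fin_two_of] using h
    refine ⟨-w, -y, -w', hw, hdet, ?_⟩
    refine (pslmk_neg _).symm.trans (congrArg pslmk (Subtype.ext ?_))
    change -!![w, y; 0, w'] = !![-w, -y; 0, -w']
    ext i j
    fin_cases i <;> fin_cases j <;> simp

lemma setOf_pow_four_eq_one [NoZeroDivisors S] {i : S} (hi : i ^ 2 = -1) :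
    {w : S | w ^ 4 = 1} = {1, i} ∪ -{1, i} := by
  ext w
  have hfactor : w ^ 4 - 1 = (w - 1) * (w + 1) * (w - i) * (w + i) := by
    linear_combination (w ^ 2 - 1) * hi
  simp only [Set.mem_ofPred_eq, Set.mem_union, Set.mem_neg, Set.mem_insert_iff,
    Set.mem_singleton_iff, ← sub_eq_zero (a := w ^ 4), hfactor, mul_eq_zero, sub_eq_zero,
    add_eq_zero_iff_eq_neg, neg_eq_iff_eq_neg]
  tauto

end

lemma GaussianInt.sqrtd_sq : (Zsqrtd.sqrtd : GaussianInt) ^ 2 = -1 := by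
  rw [sq, Zsqrtd.dmuld]
  simp

lemma GaussianInt.isUnit_sqrtd : IsUnit (Zsqrtd.sqrtd : GaussianInt) :=
  .of_mul_eq_one (-Zsqrtd.sqrtd) <| by linear_combination -GaussianInt.sqrtd_sq

theorem image_stab_infinity_general (I : Ideal GaussianInt) (hI : I.IsPrime)
    (H₁ : Subgroup (Matrix.ProjectiveSpecialLinearGroup (Fin 2) GaussianInt))
    (hH₁ : (H₁ : Set (Matrix.ProjectiveSpecialLinearGroup (Fin 2) GaussianInt)) =
      {g | ∃ u x u' : GaussianInt, (u = 1 ∨ u = Zsqrtd.sqrtd) ∧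
        ∃ h : Matrix.det !![u, x; 0, u'] = 1, g = pslmk ⟨!![u, x; 0, u'], h⟩})
    (H₂ : Subgroup (Matrix.ProjectiveSpecialLinearGroup (Fin 2) (GaussianInt ⧸ I)))
    (hH₂ : (H₂ : Set (Matrix.ProjectiveSpecialLinearGroup (Fin 2) (GaussianInt ⧸ I))) =
      {g | ∃ w y w' : GaussianInt ⧸ I, w ^ 4 = 1 ∧
        ∃ h : Matrix.det !![w, y; 0, w'] = 1, g = pslmk ⟨!![w, y; 0, w'], h⟩}) :
    Subgroup.map (pslMap (Ideal.Quotient.mk I)) H₁ = H₂ := by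
  have hH₁' : (H₁ : Set (ProjectiveSpecialLinearGroup (Fin 2) GaussianInt)) =
      upperTriangularClasses {1, Zsqrtd.sqrtd} := hH₁
  have hH₂' : (H₂ : Set (ProjectiveSpecialLinearGroup (Fin 2) (GaussianInt ⧸ I))) =
      upperTriangularClasses {w | w ^ 4 = 1} := hH₂
  have hunits : ∀ u ∈ ({1, Zsqrtd.sqrtd} : Set GaussianInt), IsUnit u := by
    rintro u (rfl | rfl)
    exacts [isUnit_one, GaussianInt.isUnit_sqrtd]
  have hi : Ideal.Quotient.mk I Zsqrtd.sqrtd ^ 2 = -1 := by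
    rw [← map_pow, GaussianInt.sqrtd_sq, map_neg, map_one]
  apply SetLike.coe_injective
  rw [Subgroup.coe_map, hH₁', hH₂', image_pslMap_upperTriangularClasses
    Ideal.Quotient.mk_surjective hunits, Set.image_pair, map_one, setOf_pow_four_eq_one hi,
    upperTriangularClasses_union_neg]

/-- Let `I` be a prime ideal of `ℤ[i]` whose quotient `F = ℤ[i]/I` is a finite field of
odd cardinality. The image under the induced map `PSL₂(ℤ[i]) → PSL₂(F)` of the subgroup
of classes of matrices `[[u, x], [0, u⁻¹]]` with `u ∈ {1, i}` is the subgroup of classes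
of upper triangular matrices `[[w, y], [0, w⁻¹]]` with `w⁴ = 1`. -/
theorem image_stab_infinity (I : Ideal GaussianInt) (hI : I.IsPrime)
    [Fintype (GaussianInt ⧸ I)] (hfield : IsField (GaussianInt ⧸ I))
    (hodd : Odd (Fintype.card (GaussianInt ⧸ I)))
    (H₁ : Subgroup (Matrix.ProjectiveSpecialLinearGroup (Fin 2) GaussianInt))
    (hH₁ : (H₁ : Set (Matrix.ProjectiveSpecialLinearGroup (Fin 2) GaussianInt)) =
      {g | ∃ u x u' : GaussianInt, (u = 1 ∨ u = Zsqrtd.sqrtd) ∧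
        ∃ h : Matrix.det !![u, x; 0, u'] = 1, g = pslmk ⟨!![u, x; 0, u'], h⟩})
    (H₂ : Subgroup (Matrix.ProjectiveSpecialLinearGroup (Fin 2) (GaussianInt ⧸ I)))
    (hH₂ : (H₂ : Set (Matrix.ProjectiveSpecialLinearGroup (Fin 2) (GaussianInt ⧸ I))) =
      {g | ∃ w y w' : GaussianInt ⧸ I, w ^ 4 = 1 ∧
        ∃ h : Matrix.det !![w, y; 0, w'] = 1, g = pslmk ⟨!![w, y; 0, w'], h⟩}) :
    Subgroup.map (pslMap (Ideal.Quotient.mk I)) H₁ = H₂ :=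
  image_stab_infinity_general I hI H₁ hH₁ H₂ hH₂
end
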